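/- Let X be an n-correct set and ℓ a line containing at most n nodes of X. If λ is a maximal line of X with λ ∩ ℓ ∩ X = ∅ (an ℓ-disjoint maximal line), then the set of nodes of X using ℓ equals the set of nodes of X \ λ using ℓ: X^ℓ = (X \ λ)^ℓ. -/

import Mathlib

attribute [local instance] Classical.propDecidable

/-- Evaluate a bivariate polynomial at a point of the plane. -/
noncomputable def evalPt (p : MvPolynomial (Fin 2) ℝ) (A : ℝ × ℝ) : ℝ :=
  MvPolynomial.eval ![A.1, A.2] p

/-- A (polynomial defining a) line: a bivariate polynomial of total degree exactly 1. -/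
def IsLinearPoly (l : MvPolynomial (Fin 2) ℝ) : Prop := l.totalDegree = 1

/-- A point lies on the line defined by `l`. -/
def OnLine (l : MvPolynomial (Fin 2) ℝ) (A : ℝ × ℝ) : Prop := evalPt l A = 0

/-- Two degree-1 polynomials define the same line (same zero set). -/
def SameLine (l₁ l₂ : MvPolynomial (Fin 2) ℝ) : Prop := ∀ P, OnLine l₁ P ↔ OnLine l₂ P

/-- `X` is an `n`-correct set of nodes in the plane. -/
def NCorrect (n : ℕ) (X : Finset (ℝ × ℝ)) : Prop :=
  X.card = (n + 2) * (n + 1) / 2 ∧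
  ∀ c : (ℝ × ℝ) → ℝ, ∃! p : MvPolynomial (Fin 2) ℝ,
    p.totalDegree ≤ n ∧ ∀ A ∈ X, evalPt p A = c A

/-- `p` is the `n`-fundamental polynomial of node `A` in `X`. -/
def IsFundamental (n : ℕ) (X : Finset (ℝ × ℝ)) (A : ℝ × ℝ)
    (p : MvPolynomial (Fin 2) ℝ) : Prop :=
  p.totalDegree ≤ n ∧ evalPt p A = 1 ∧ ∀ B ∈ X, B ≠ A → evalPt p B = 0

/-- Node `A` of `X` uses line `l`. -/
def Uses (n : ℕ) (X : Finset (ℝ × ℝ)) (A : ℝ × ℝ) (l : MvPolynomial (Fin 2) ℝ) : Prop :=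
  ∃ p, IsFundamental n X A p ∧ l ∣ p

/-- The set of nodes of `X` using the line `l` (the set `Xˡ`). -/
noncomputable def UsedSet (n : ℕ) (X : Finset (ℝ × ℝ)) (l : MvPolynomial (Fin 2) ℝ) :
    Finset (ℝ × ℝ) := X.filter (fun A => Uses n X A l)

/-- `l` is a maximal line of `X`: a line passing through exactly `n+1` nodes. -/
def IsMaximalLine (n : ℕ) (X : Finset (ℝ × ℝ)) (l : MvPolynomial (Fin 2) ℝ) : Prop :=
  IsLinearPoly l ∧ (X.filter (fun A => OnLine l A)).card = n + 1

/-- `X` is a `GC_n` set. -/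
def GCSet (n : ℕ) (X : Finset (ℝ × ℝ)) : Prop :=
  NCorrect n X ∧
  ∀ A ∈ X, ∃ f : Fin n → MvPolynomial (Fin 2) ℝ,
    (∀ i, IsLinearPoly (f i)) ∧ IsFundamental n X A (∏ i, f i)

/-- `L` is a set of representatives (one per line) of all maximal lines of `X`. -/
def MaximalLinesRep (n : ℕ) (X : Finset (ℝ × ℝ))
    (L : Finset (MvPolynomial (Fin 2) ℝ)) : Prop :=
  (∀ l ∈ L, IsMaximalLine n X l) ∧
  (∀ l₁ ∈ L, ∀ l₂ ∈ L, SameLine l₁ l₂ → l₁ = l₂) ∧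
  (∀ l, IsMaximalLine n X l → ∃ l' ∈ L, SameLine l l')

/-- A maximal line `lam` is `l`-disjoint: it meets `l` at no node of `X`. -/
def IsDisjointMax (n : ℕ) (X : Finset (ℝ × ℝ)) (l lam : MvPolynomial (Fin 2) ℝ) : Prop :=
  IsMaximalLine n X lam ∧ ∀ A ∈ X, ¬(OnLine lam A ∧ OnLine l A)

/-- A maximal line `lam` is a member of a pair of `l`-adjoint maximal lines. -/
def IsAdjointMax (n : ℕ) (X : Finset (ℝ × ℝ)) (l lam : MvPolynomial (Fin 2) ℝ) : Prop :=
  IsMaximalLine n X lam ∧ ∃ lam', IsMaximalLine n X lam' ∧ ¬SameLine lam lam' ∧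
    ∃ A ∈ X, OnLine lam A ∧ OnLine lam' A ∧ OnLine l A

/-- The `l`-lowering `X̂(l)` of `X`. -/
noncomputable def Lowering (n : ℕ) (X : Finset (ℝ × ℝ)) (l : MvPolynomial (Fin 2) ℝ) :
    Finset (ℝ × ℝ) :=
  X.filter (fun A => ¬ ∃ lam, (IsDisjointMax n X l lam ∨ IsAdjointMax n X l lam) ∧ OnLine lam A)

/-- A node `A` is a `1_m`-node of `X` w.r.t. the maximal-line representatives `L`:
it lies on exactly one maximal line. -/
def Is1mNode (L : Finset (MvPolynomial (Fin 2) ℝ)) (A : ℝ × ℝ) : Prop :=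
  (L.filter (fun l => OnLine l A)).card = 1

/-- `k` lines in general position: no two parallel (any two meet in exactly one point),
no three concurrent. -/
def InGenPos (k : ℕ) (f : Fin k → MvPolynomial (Fin 2) ℝ) : Prop :=
  (∀ i, IsLinearPoly (f i)) ∧
  (∀ i j, i ≠ j → ∃! P : ℝ × ℝ, OnLine (f i) P ∧ OnLine (f j) P) ∧
  (∀ i j m, i ≠ j → j ≠ m → i ≠ m →
    ¬ ∃ P : ℝ × ℝ, OnLine (f i) P ∧ OnLine (f j) P ∧ OnLine (f m) P)

/-- `X` is a Chung-Yao lattice of degree `m`. -/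
def IsChungYao (m : ℕ) (X : Finset (ℝ × ℝ)) : Prop :=
  ∃ f : Fin (m + 2) → MvPolynomial (Fin 2) ℝ, InGenPos (m + 2) f ∧
    ∀ P : ℝ × ℝ, P ∈ X ↔ ∃ i j, i ≠ j ∧ OnLine (f i) P ∧ OnLine (f j) P

/-! If a node `A` uses `ℓ`, its fundamental polynomial is `ℓ * p` with `deg p ≤ n - 1`. As `λ` meets
`ℓ` at no node, `p` vanishes at the nodes of `λ` other than `A`, which are at least `n` many; a
polynomial vanishing at more points of a line than its degree is divisible by the line's equation,
so `λ ∣ p`. Hence `A ∉ λ`, and `ℓ * p / λ`, rescaled, is a fundamental polynomial of `A` in `X \ λ`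
of degree `n - 1` that still uses `ℓ`. Conversely, `λ` times a fundamental polynomial of `A` in
`X \ λ`, normalized at `A`, is one in `X`. -/

open MvPolynomial

theorem MvPolynomial.natDegree_aeval_le_totalDegree {σ R : Type*} [CommSemiring R]
    {g : σ → Polynomial R} (hg : ∀ i, (g i).natDegree ≤ 1) (p : MvPolynomial σ R) :
    (aeval g p).natDegree ≤ p.totalDegree := by
  conv_lhs => rw [p.as_sum, map_sum]
  refine Polynomial.natDegree_sum_le_of_forall_le _ _ fun d hd => ?_
  rw [aeval_monomial]
  refine Polynomial.natDegree_C_mul_le _ _ |>.trans ?_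
  refine (Polynomial.natDegree_prod_le _ _).trans ?_
  refine le_trans ?_ (le_totalDegree hd)
  refine Finset.sum_le_sum fun i _ => Polynomial.natDegree_pow_le.trans ?_
  simpa using Nat.mul_le_mul_left (d i) (hg i)

theorem MvPolynomial.eq_of_totalDegree_le_one {R : Type*} [CommSemiring R]
    {p : MvPolynomial (Fin 2) R} (hp : p.totalDegree ≤ 1) :
    p = C (coeff (Finsupp.single 0 1) p) * X 0 + C (coeff (Finsupp.single 1 1) p) * X 1 +
      C (coeff 0 p) := by
  have hsupp : ∀ m ∈ p.support, m = 0 ∨ m = Finsupp.single 0 1 ∨ m = Finsupp.single 1 1 := by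
    intro m hm
    have hdeg : m 0 + m 1 ≤ 1 := by
      have := (le_totalDegree hm).trans hp
      rwa [Finsupp.sum_fintype _ _ fun _ => rfl, Fin.sum_univ_two] at this
    have h0 : m 0 = 0 ∨ m 0 = 1 := by omega
    have h1 : m 1 = 0 ∨ m 1 = 1 := by omega
    rcases h0 with h0 | h0 <;> rcases h1 with h1 | h1
    · left; ext i; fin_cases i <;> simp [h0, h1]
    · right; right; ext i; fin_cases i <;> simp [h0, h1]
    · right; left; ext i; fin_cases i <;> simp [h0, h1]
    · omega
  ext m
  by_cases h0 : m = 0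
  · subst h0; simp
  by_cases h1 : m = Finsupp.single 0 1
  · subst h1; simp [Ne.symm h0]
  by_cases h2 : m = Finsupp.single 1 1
  · subst h2; simp [Ne.symm h0]
  have : m ∉ p.support := fun hm => by rcases hsupp m hm with h | h | h <;> contradiction
  simp [coeff_X, coeff_C, Ne.symm h0, Ne.symm h1, Ne.symm h2, notMem_support_iff.mp this]

theorem evalPt_linear (a b c : ℝ) (P : ℝ × ℝ) :
    evalPt (C a * X 0 + C b * X 1 + C c) P = a * P.1 + b * P.2 + c := by
  simp [evalPt]

theorem evalPt_mul (p q : MvPolynomial (Fin 2) ℝ) (P : ℝ × ℝ) :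
    evalPt (p * q) P = evalPt p P * evalPt q P := by
  simp [evalPt]

theorem IsLinearPoly.exists_eq {l : MvPolynomial (Fin 2) ℝ} (hl : IsLinearPoly l) :
    ∃ a b c : ℝ, a ^ 2 + b ^ 2 ≠ 0 ∧ l = C a * X 0 + C b * X 1 + C c := by
  refine ⟨_, _, _, fun hab => ?_, eq_of_totalDegree_le_one hl.le⟩
  have ha : coeff (Finsupp.single 0 1) l = 0 := by nlinarith
  have hb : coeff (Finsupp.single 1 1) l = 0 := by nlinarith
  have hdeg : l.totalDegree = 1 := hl
  rw [eq_of_totalDegree_le_one hl.le, ha, hb] at hdeg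
  simp at hdeg

theorem exists_affine_param_of_sq_add_sq_ne_zero {a b : ℝ} (hab : a ^ 2 + b ^ 2 ≠ 0) (c : ℝ) :
    ∃ (P₀ v : ℝ × ℝ) (τ : ℝ × ℝ → ℝ),
      ∀ B : ℝ × ℝ, a * B.1 + b * B.2 + c = 0 → P₀ + τ B • v = B := by
  refine ⟨(-(a * c) / (a ^ 2 + b ^ 2), -(b * c) / (a ^ 2 + b ^ 2)), (-b, a),
    fun B => (a * B.2 - b * B.1) / (a ^ 2 + b ^ 2), fun B hB => ?_⟩
  ext
  · simp only [Prod.fst_add, Prod.smul_fst, smul_eq_mul]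
    field_simp
    linear_combination (-a) * hB
  · simp only [Prod.snd_add, Prod.smul_snd, smul_eq_mul]
    field_simp
    linear_combination (-b) * hB

theorem evalPt_add_smul_eq_zero_of_card_lt {p : MvPolynomial (Fin 2) ℝ} {P₀ v : ℝ × ℝ}
    {T : Finset ℝ} (hT : ∀ t ∈ T, evalPt p (P₀ + t • v) = 0) (hcard : p.totalDegree < T.card)
    (t : ℝ) :
    evalPt p (P₀ + t • v) = 0 := by
  set g : Fin 2 → Polynomial ℝ :=
    ![Polynomial.C v.1 * Polynomial.X + Polynomial.C P₀.1,
      Polynomial.C v.2 * Polynomial.X + Polynomial.C P₀.2]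
  have hrestrict : ∀ s, (aeval g p).eval s = evalPt p (P₀ + s • v) := by
    intro s
    rw [← Polynomial.coe_aeval_eq_eval, comp_aeval_apply, evalPt, ← aeval_eq_eval]
    congr 2
    funext i
    fin_cases i <;> simp [g] <;> ring
  have hdeg : (aeval g p).natDegree ≤ p.totalDegree := by
    refine natDegree_aeval_le_totalDegree (fun i => ?_) p
    fin_cases i <;> exact Polynomial.natDegree_linear_le
  have hzero : aeval g p = 0 :=
    Polynomial.eq_zero_of_natDegree_lt_card_of_eval_eq_zero' _ T
      (fun s hs => (hrestrict s).trans (hT s hs)) (hdeg.trans_lt hcard)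
  rw [← hrestrict, hzero, Polynomial.eval_zero]

theorem linear_dvd_of_forall_evalPt_eq_zero {a b c : ℝ} (hab : a ^ 2 + b ^ 2 ≠ 0)
    {p : MvPolynomial (Fin 2) ℝ}
    (hp : ∀ P : ℝ × ℝ, a * P.1 + b * P.2 + c = 0 → evalPt p P = 0) :
    C a * X 0 + C b * X 1 + C c ∣ p := by
  set l : MvPolynomial (Fin 2) ℝ := C a * X 0 + C b * X 1 + C c
  set D := a ^ 2 + b ^ 2
  -- `s` is the orthogonal projection onto the line: `X i ≡ s i` modulo `l`, so `p ≡ p ∘ s`, and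
  -- `p ∘ s` vanishes everywhere.
  set s : Fin 2 → MvPolynomial (Fin 2) ℝ := ![X 0 - C (a / D) * l, X 1 - C (b / D) * l]
  have hmod : (Ideal.Quotient.mkₐ ℝ (Ideal.span {l})).comp (aeval s) =
      Ideal.Quotient.mkₐ ℝ (Ideal.span {l}) := by
    ext i
    rw [AlgHom.comp_apply, aeval_X, Ideal.Quotient.mkₐ_eq_mk, Ideal.Quotient.eq,
      Ideal.mem_span_singleton]
    fin_cases i
    · exact ⟨-C (a / D), by simp [s]; ring⟩
    · exact ⟨-C (b / D), by simp [s]; ring⟩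
  have hproj : aeval s p = 0 := by
    refine MvPolynomial.funext fun x => ?_
    rw [map_zero, ← aeval_eq_eval, comp_aeval_apply]
    have hQ := hp (aeval x (s 0), aeval x (s 1)) (by simp [s, l]; field_simp; ring)
    rw [evalPt, ← aeval_eq_eval] at hQ
    have hvec : (fun i => aeval x (s i)) = ![aeval x (s 0), aeval x (s 1)] := by
      funext i
      fin_cases i <;> rfl
    rwa [hvec]
  have hmem : p - aeval s p ∈ Ideal.span {l} := Ideal.Quotient.eq.mp (congrArg (· p) hmod).symm
  rwa [hproj, sub_zero, Ideal.mem_span_singleton] at hmem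

theorem IsLinearPoly.dvd_of_card_lt {l p : MvPolynomial (Fin 2) ℝ} (hl : IsLinearPoly l)
    {S : Finset (ℝ × ℝ)} (hSl : ∀ B ∈ S, OnLine l B) (hSp : ∀ B ∈ S, evalPt p B = 0)
    (hcard : p.totalDegree < S.card) : l ∣ p := by
  obtain ⟨a, b, c, hab, rfl⟩ := hl.exists_eq
  simp only [OnLine, evalPt_linear] at hSl
  obtain ⟨P₀, v, τ, hτ⟩ := exists_affine_param_of_sq_add_sq_ne_zero hab c
  refine linear_dvd_of_forall_evalPt_eq_zero hab fun P hP => ?_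
  rw [← hτ P hP]
  refine evalPt_add_smul_eq_zero_of_card_lt (T := S.image τ) ?_ ?_ _
  · simp only [Finset.forall_mem_image]
    intro B hB
    rw [hτ B (hSl B hB)]
    exact hSp B hB
  · rwa [Finset.card_image_of_injOn fun B hB B' hB' h => by
      rw [← hτ B (hSl B hB), ← hτ B' (hSl B' hB'), h]]

theorem IsFundamental.ne_zero {n : ℕ} {X : Finset (ℝ × ℝ)} {A : ℝ × ℝ}
    {p : MvPolynomial (Fin 2) ℝ} (hp : IsFundamental n X A p) : p ≠ 0 := by
  rintro rfl
  simpa [evalPt] using hp.2.1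

theorem IsDisjointMax.dvd_of_isFundamental_mul {n : ℕ} {X : Finset (ℝ × ℝ)} {A : ℝ × ℝ}
    {l lam p : MvPolynomial (Fin 2) ℝ} (hlam : IsDisjointMax n X l lam) (hl : IsLinearPoly l)
    (hp : IsFundamental n X A (l * p)) : lam ∣ p := by
  have hdeg : p.totalDegree < n := by
    have := hp.1
    rw [totalDegree_mul_of_isDomain (left_ne_zero_of_mul hp.ne_zero)
      (right_ne_zero_of_mul hp.ne_zero), hl] at this
    omega
  refine hlam.1.1.dvd_of_card_lt (S := (X.filter (OnLine lam ·)).erase A) ?_ ?_ ?_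
  · exact fun B hB => (Finset.mem_filter.mp (Finset.mem_of_mem_erase hB)).2
  · intro B hB
    obtain ⟨hBA, hBX, hBlam⟩ : B ≠ A ∧ B ∈ X ∧ OnLine lam B := by simpa using hB
    have hzero := hp.2.2 B hBX hBA
    rw [evalPt_mul] at hzero
    exact (mul_eq_zero.mp hzero).resolve_left fun h => hlam.2 B hBX ⟨hBlam, h⟩
  · have := Finset.pred_card_le_card_erase (s := X.filter (OnLine lam ·)) (a := A)
    rw [hlam.1.2] at this
    omega

theorem IsFundamental.of_line_mul {n : ℕ} {X : Finset (ℝ × ℝ)} {A : ℝ × ℝ}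
    {lam q : MvPolynomial (Fin 2) ℝ} (hq : IsFundamental n X A (lam * q))
    (hlam : IsLinearPoly lam) :
    IsFundamental (n - 1) (X.filter (fun B => ¬ OnLine lam B)) A (C (evalPt lam A) * q) := by
  refine ⟨?_, ?_, fun B hB hBA => ?_⟩
  · have := hq.1
    rw [totalDegree_mul_of_isDomain (left_ne_zero_of_mul hq.ne_zero)
      (right_ne_zero_of_mul hq.ne_zero), hlam] at this
    exact (totalDegree_mul _ _).trans (by rw [totalDegree_C]; omega)
  · simpa [evalPt_mul, evalPt] using hq.2.1
  · obtain ⟨hBX, hBlam⟩ := Finset.mem_filter.mp hB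
    have hzero := hq.2.2 B hBX hBA
    rw [evalPt_mul] at hzero ⊢
    rw [(mul_eq_zero.mp hzero).resolve_left hBlam, mul_zero]

theorem IsFundamental.line_mul {m : ℕ} {X : Finset (ℝ × ℝ)} {A : ℝ × ℝ}
    {lam q : MvPolynomial (Fin 2) ℝ}
    (hq : IsFundamental m (X.filter (fun B => ¬ OnLine lam B)) A q) (hlam : lam.totalDegree ≤ 1)
    (hA : ¬ OnLine lam A) :
    IsFundamental (m + 1) X A (C (evalPt lam A)⁻¹ * lam * q) := by
  refine ⟨?_, ?_, fun B hB hBA => ?_⟩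
  · refine (totalDegree_mul _ _).trans (add_comm m 1 ▸ add_le_add ?_ hq.1)
    exact (totalDegree_mul _ _).trans (by rw [totalDegree_C]; omega)
  · rw [evalPt_mul, evalPt_mul, hq.2.1, mul_one]
    simpa [evalPt] using inv_mul_cancel₀ hA
  · rw [evalPt_mul, evalPt_mul]
    by_cases hBlam : OnLine lam B
    · rw [show evalPt lam B = 0 from hBlam, mul_zero, zero_mul]
    · rw [hq.2.2 B (Finset.mem_filter.mpr ⟨hB, hBlam⟩) hBA, mul_zero]

theorem disjoint_reduction_general
    (n : ℕ) (hn : 1 ≤ n) (X : Finset (ℝ × ℝ))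
    (l : MvPolynomial (Fin 2) ℝ) (hl : IsLinearPoly l)
    (lam : MvPolynomial (Fin 2) ℝ) (hlam : IsMaximalLine n X lam)
    (hdisj : ∀ A ∈ X, ¬(OnLine lam A ∧ OnLine l A)) :
    UsedSet n X l = UsedSet (n - 1) (X.filter (fun A => ¬ OnLine lam A)) l := by
  ext A
  simp only [UsedSet, Finset.mem_filter]
  constructor
  · rintro ⟨hA, _, hp, p, rfl⟩
    obtain ⟨q, rfl⟩ := IsDisjointMax.dvd_of_isFundamental_mul ⟨hlam, hdisj⟩ hl hp
    rw [mul_left_comm] at hp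
    have hAlam : ¬ OnLine lam A := fun h => by
      simpa [evalPt_mul, show evalPt lam A = 0 from h] using hp.2.1
    exact ⟨⟨hA, hAlam⟩, _, hp.of_line_mul hlam.1, (dvd_mul_right l q).mul_left _⟩
  · rintro ⟨⟨hA, hAlam⟩, q, hq, hlq⟩
    have hp := hq.line_mul hlam.1.le hAlam
    rw [Nat.sub_add_cancel hn] at hp
    exact ⟨hA, _, hp, hlq.mul_left _⟩

/-- `l`-disjoint reduction: if a maximal line `lam` meets the line `l`
at no node of `X`, then `Xˡ = (X \ lam)ˡ`. -/
theorem disjoint_reduction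
    (n : ℕ) (hn : 1 ≤ n) (X : Finset (ℝ × ℝ)) (hX : NCorrect n X)
    (l : MvPolynomial (Fin 2) ℝ) (hl : IsLinearPoly l)
    (hk : (X.filter (fun A => OnLine l A)).card ≤ n)
    (lam : MvPolynomial (Fin 2) ℝ) (hlam : IsMaximalLine n X lam)
    (hdisj : ∀ A ∈ X, ¬(OnLine lam A ∧ OnLine l A)) :
    UsedSet n X l = UsedSet (n - 1) (X.filter (fun A => ¬ OnLine lam A)) l :=
  disjoint_reduction_general n hn X l hl lam hlam hdisj
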